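/- The abstraction rule Abs is sound: if an interpretation I satisfies the universal closure of (s[k] ≐ t ∨ C) ∨ F[ᾱ, p], where k is a subterm occurrence of s and x is a fresh variable, then I satisfies the universal closure of (s[x] ≐ t ∨ x ≉ k ∨ C) ∨ F[ᾱ, p]. -/

import Mathlib

/-- First-order terms over function symbols `F` and variables `V`. -/
inductive Term (F V : Type) : Type where
  | var : V → Term F V
  | app : F → List (Term F V) → Term F V

/-- An interpretation: a nonempty domain together with interpretations of the
function symbols. -/
structure Interp (F : Type) where
  D : Type
  default : D
  fn : F → List D → D

/-- Evaluation of a term in an interpretation under a variable assignment. -/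
def evalT {F V : Type} (I : Interp F) (v : V → I.D) : Term F V → I.D
  | Term.var x => v x
  | Term.app f ts => I.fn f (ts.attach.map fun t => evalT I v t.1)
decreasing_by
  have := List.sizeOf_lt_of_mem t.2
  simp only [Term.app.sizeOf_spec] at *
  omega

/-- An equational literal: a sign (`true` = equation, `false` = disequation)
together with the two sides. -/
abbrev Lit (F V : Type) := Bool × Term F V × Term F V

/-- A clause: a finite disjunction (list) of literals. -/
abbrev Clause (F V : Type) := List (Lit F V)

/-- Truth of a literal in `I` under assignment `v`. -/
def litSat {F V : Type} (I : Interp F) (v : V → I.D) (l : Lit F V) : Prop :=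
  if l.1 then evalT I v l.2.1 = evalT I v l.2.2
  else evalT I v l.2.1 ≠ evalT I v l.2.2

/-- Truth of a clause in `I` under assignment `v`: some literal is true. -/
def clauseSat {F V : Type} (I : Interp F) (v : V → I.D) (C : Clause F V) : Prop :=
  ∃ l ∈ C, litSat I v l

/-- First-order formulas with equality. -/
inductive Fml (F V : Type) : Type where
  | eq : Term F V → Term F V → Fml F V
  | not : Fml F V → Fml F V
  | and : Fml F V → Fml F V → Fml F V
  | or : Fml F V → Fml F V → Fml F V
  | imp : Fml F V → Fml F V → Fml F V
  | all : V → Fml F V → Fml F V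
  | ex : V → Fml F V → Fml F V

/-- Tarskian satisfaction of a formula. -/
def Sat {F V : Type} [DecidableEq V] (I : Interp F) : (V → I.D) → Fml F V → Prop
  | v, Fml.eq s t => evalT I v s = evalT I v t
  | v, Fml.not φ => ¬ Sat I v φ
  | v, Fml.and φ ψ => Sat I v φ ∧ Sat I v ψ
  | v, Fml.or φ ψ => Sat I v φ ∨ Sat I v ψ
  | v, Fml.imp φ ψ => Sat I v φ → Sat I v ψ
  | v, Fml.all x φ => ∀ d : I.D, Sat I (Function.update v x d) φ
  | v, Fml.ex x φ => ∃ d : I.D, Sat I (Function.update v x d) φ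

/-- Applying a substitution to a term. -/
def applySubst {F V : Type} (σ : V → Term F V) : Term F V → Term F V
  | Term.var x => σ x
  | Term.app f ts => Term.app f (ts.attach.map fun t => applySubst σ t.1)
decreasing_by
  have := List.sizeOf_lt_of_mem t.2
  simp only [Term.app.sizeOf_spec] at *
  omega

/-- Applying a substitution to a literal. -/
def applyLit {F V : Type} (σ : V → Term F V) (l : Lit F V) : Lit F V :=
  (l.1, applySubst σ l.2.1, applySubst σ l.2.2)

/-- Applying a substitution to a clause. -/
def applyClause {F V : Type} (σ : V → Term F V) (C : Clause F V) : Clause F V :=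
  C.map (applyLit σ)

/-- The variable `x` occurs in the term. -/
inductive VarInT {F V : Type} (x : V) : Term F V → Prop where
  | here : VarInT x (Term.var x)
  | arg {f : F} {ts : List (Term F V)} {t : Term F V} :
      t ∈ ts → VarInT x t → VarInT x (Term.app f ts)

/-- The variable `x` occurs in the literal. -/
def VarInLit {F V : Type} (x : V) (l : Lit F V) : Prop :=
  VarInT x l.2.1 ∨ VarInT x l.2.2

/-- The variable `x` occurs in the clause. -/
def VarInClause {F V : Type} (x : V) (C : Clause F V) : Prop :=
  ∃ l ∈ C, VarInLit x l

/-- The variable `x` occurs in the formula (free or bound). -/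
def VarInFml {F V : Type} (x : V) : Fml F V → Prop
  | Fml.eq s t => VarInT x s ∨ VarInT x t
  | Fml.not φ => VarInFml x φ
  | Fml.and φ ψ => VarInFml x φ ∨ VarInFml x ψ
  | Fml.or φ ψ => VarInFml x φ ∨ VarInFml x ψ
  | Fml.imp φ ψ => VarInFml x φ ∨ VarInFml x ψ
  | Fml.all z φ => x = z ∨ VarInFml x φ
  | Fml.ex z φ => x = z ∨ VarInFml x φ

/-- One-hole contexts for terms: `s[·]`. -/
inductive Ctx (F V : Type) : Type where
  | hole : Ctx F V
  | app : F → List (Term F V) → Ctx F V → List (Term F V) → Ctx F V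

/-- Filling the hole of a context with a term. -/
def Ctx.fill {F V : Type} : Ctx F V → Term F V → Term F V
  | Ctx.hole, u => u
  | Ctx.app f pre c post, u => Term.app f (pre ++ c.fill u :: post)

/-- The variable `x` occurs in the context. -/
def VarInCtx {F V : Type} (x : V) : Ctx F V → Prop
  | Ctx.hole => False
  | Ctx.app _ pre c post =>
      (∃ u ∈ pre, VarInT x u) ∨ VarInCtx x c ∨ (∃ u ∈ post, VarInT x u)

/-- Program terms: terms together with the conditional constructor
`ite(l ≈ r, p, q)`. -/
inductive PTerm (F V : Type) : Type where
  | t : Term F V → PTerm F V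
  | ite : Term F V → Term F V → PTerm F V → PTerm F V → PTerm F V

open Classical in
/-- Evaluation of a program term. -/
noncomputable def evalP {F V : Type} (I : Interp F) (v : V → I.D) : PTerm F V → I.D
  | PTerm.t u => evalT I v u
  | PTerm.ite l r p q =>
      if evalT I v l = evalT I v r then evalP I v p else evalP I v q

/-- The variable `x` occurs in the program term. -/
def VarInP {F V : Type} (x : V) : PTerm F V → Prop
  | PTerm.t u => VarInT x u
  | PTerm.ite l r p q => VarInT x l ∨ VarInT x r ∨ VarInP x p ∨ VarInP x q

/-- Truth of the answer clause `C ◦ ⟨p⟩` in `I`: the universal closure of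
`C ∨ F[ᾱ, p]` holds. -/
def AnsTrueP {F V : Type} [DecidableEq V] (I : Interp F) (Fm : Fml F V) (y : V)
    (C : Clause F V) (p : PTerm F V) : Prop :=
  ∀ v : V → I.D, clauseSat I v C ∨ Sat I (Function.update v y (evalP I v p)) Fm

theorem evalT_app {F V : Type} (I : Interp F) (v : V → I.D) (f : F)
    (ts : List (Term F V)) :
    evalT I v (Term.app f ts) = I.fn f (ts.map (evalT I v)) := by
  rw [evalT]
  congr 1
  simp [List.attach_map_val]

theorem evalT_fill_congr {F V : Type} (I : Interp F) (v : V → I.D)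
    (c : Ctx F V) (u1 u2 : Term F V) (h : evalT I v u1 = evalT I v u2) :
    evalT I v (c.fill u1) = evalT I v (c.fill u2) := by
  induction c with
  | hole => exact h
  | app f pre c post ih =>
    simp [Ctx.fill, evalT_app, ih]

/-- Soundness of abstraction `Abs`: if `I` satisfies the
universal closure of `(s[k] ≐ t ∨ C) ∨ F[ᾱ, p]` and `x` is a fresh variable,
then `I` satisfies the universal closure of
`(s[x] ≐ t ∨ x ≉ k ∨ C) ∨ F[ᾱ, p]`. -/
theorem abs_sound {F V : Type} [DecidableEq V]
    (I : Interp F) (Fm : Fml F V) (y : V)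
    (s : Ctx F V) (k t : Term F V) (b : Bool) (C : Clause F V) (p : PTerm F V)
    (x : V)
    (hfresh : ¬ VarInCtx x s ∧ ¬ VarInT x k ∧ ¬ VarInT x t ∧
      ¬ VarInClause x C ∧ ¬ VarInP x p ∧ ¬ VarInFml x Fm ∧ x ≠ y)
    (H : AnsTrueP I Fm y ((b, s.fill k, t) :: C) p) :
    AnsTrueP I Fm y
      ((b, s.fill (Term.var x), t) :: (false, Term.var x, k) :: C) p := by
  intro v
  by_cases hx : evalT I v (Term.var x) = evalT I v k
  · rcases H v with ⟨l, hl, hsat⟩ | hF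
    · rcases List.mem_cons.mp hl with rfl | hl
      · left
        refine ⟨(b, s.fill (Term.var x), t), by simp, ?_⟩
        have := evalT_fill_congr I v s (Term.var x) k hx
        simpa [litSat, this] using hsat
      · exact Or.inl ⟨l, by simp [hl], hsat⟩
    · exact Or.inr hF
  · exact Or.inl ⟨(false, Term.var x, k), by simp, hx⟩
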